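/- Under the weighted stochastic block model, the population matrices underlying the diagonalization step factor as follows: for distinct nodes 1, 2, 3, 4, (A_0)_{l_1,l_2} := E(α_{l_1}(X_{1,2}) α_{l_2}(X_{1,3})) satisfies A_0 = G diag(p) Gᵀ, and for each l' ∈ {1,…,l}, (A_{l'})_{l_1,l_2} := E(α_{l_1}(X_{1,2}) α_{l'}(X_{1,3}) α_{l_2}(X_{1,4})) satisfies A_{l'} = G D_{l'} diag(p) Gᵀ, where D_{l'} is the r×r diagonal matrix with diagonal entries (G)_{l',1},…,(G)_{l',r}. -/

import Mathlib

/-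
Conditionally on the label vector `z`, the edge weights are independent (the CDF factorization
gives independence on the π-systems of half-lines) and the law of `X i j` depends only on
`(z i, z j)`. So for distinct `c, j₁, …, jₘ`, `E(w(Z c) ∏ₖ fₖ(X c jₖ))` is the sum over `z` of
`∏ᵢ p(z i) · w(z c) ∏ₖ eₖ(z c, z jₖ)` with `eₖ(a, b) = E(fₖ(X c j) | Z c = a, Z j = b)`, and
summing out every label but `z c` leaves `∑ₐ pₐ w(a) ∏ₖ ∑_b p_b eₖ(a, b)`. One leaf and
`w = 1_{a}` give `G l' a = ∑_b p_b e(a, b)`; two and three leaves with `w = 1` give the entries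
of `G diag(p) Gᵀ` and `G D_{l'} diag(p) Gᵀ`.
-/

open MeasureTheory

/-- The weighted stochastic block model on `n` nodes with `r` latent communities:
community labels `Z i` are i.i.d. with distribution `p`; edge weights `X i j = X j i`
are, conditionally on the labels, mutually independent with conditional CDF
`F (Z i) (Z j)` (encoded through the joint conditional CDF factorization `X_cond`). -/
structure SBM (Ω : Type) [MeasurableSpace Ω] (ℙ : Measure Ω) (n r : ℕ) where
  /-- the community distribution -/
  p : Fin r → ℝ
  /-- the community labels -/
  Z : Fin n → Ω → Fin r
  /-- the edge weights -/
  X : Fin n → Fin n → Ω → ℝ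
  /-- the conditional CDFs -/
  F : Fin r → Fin r → ℝ → ℝ
  prob : IsProbabilityMeasure ℙ
  p_pos : ∀ z, 0 < p z
  p_sum : ∑ z, p z = 1
  Z_meas : ∀ i, Measurable (Z i)
  X_meas : ∀ i j, Measurable (X i j)
  X_symm : ∀ i j, X i j = X j i
  F_symm : ∀ z₁ z₂, F z₁ z₂ = F z₂ z₁
  /-- the labels are i.i.d. with distribution `p` -/
  Z_iid : ∀ z : Fin n → Fin r,
    ℙ {ω | ∀ i, Z i ω = z i} = ENNReal.ofReal (∏ i, p (z i))
  /-- conditionally on the labels, the edge weights are mutually independent and the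
  conditional CDF of `X i j` given `Z i = z i`, `Z j = z j` is `F (z i) (z j)` -/
  X_cond : ∀ (z : Fin n → Fin r) (S : Finset (Fin n × Fin n)),
    (∀ q ∈ S, q.1 < q.2) → ∀ x : Fin n × Fin n → ℝ,
      ℙ ({ω | ∀ q ∈ S, X q.1 q.2 ω ≤ x q} ∩ {ω | ∀ i, Z i ω = z i})
        = ENNReal.ofReal ((∏ q ∈ S, F (z q.1) (z q.2) (x q)) * ∏ i, p (z i))

section Marginal

open Function

variable {ι κ R M : Type*} [Fintype ι] [DecidableEq ι] [Fintype κ] [Fintype R] [CommSemiring M]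

theorem sum_prod_mul_prod_comp_of_injective (p : R → M) (hp : ∑ a, p a = 1) {e : κ → ι}
    (he : Injective e) (u : κ → R → M) :
    ∑ z : ι → R, (∏ i, p (z i)) * ∏ k, u k (z (e k)) = ∏ k, ∑ a, p a * u k a := by
  classical
  set v : ι → R → M := extend e u 1
  have hv_off : ∀ i ∉ Set.range e, v i = 1 := fun i hi => extend_apply' _ _ _ hi
  have hv : ∀ z : ι → R, ∏ k, u k (z (e k)) = ∏ i, v i (z i) := fun z =>
    Fintype.prod_of_injective e he _ _ (fun i hi => by simp [hv_off i hi])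
      (fun k => by simp [v, he.extend_apply])
  calc ∑ z : ι → R, (∏ i, p (z i)) * ∏ k, u k (z (e k))
      = ∑ z : ι → R, ∏ i, p (z i) * v i (z i) := by
        simp only [hv, Finset.prod_mul_distrib]
    _ = ∏ i, ∑ a, p a * v i a := (Fintype.prod_sum fun i a => p a * v i a).symm
    _ = ∏ k, ∑ a, p a * u k a :=
        (Fintype.prod_of_injective e he _ _ (fun i hi => by simp [hv_off i hi, hp])
          (fun k => by simp [v, he.extend_apply])).symm

theorem sum_prod_mul_star (p : R → M) (hp : ∑ a, p a = 1) (c : ι) {e : κ → ι}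
    (he : Injective e) (hc : ∀ k, e k ≠ c) (w : R → M) (u : κ → R → R → M) :
    ∑ z : ι → R, (∏ i, p (z i)) * (w (z c) * ∏ k, u k (z c) (z (e k))) =
      ∑ a, p a * w a * ∏ k, ∑ b, p b * u k a b := by
  classical
  have he' : Injective fun o : Option κ => o.elim c e := by
    rintro (_ | k) (_ | k') h
    · rfl
    · exact absurd h.symm (hc k')
    · exact absurd h (hc k)
    · exact congrArg some (he h)
  -- split by the value `a` of the centre label, which becomes the factor indexed by `none`
  calc ∑ z : ι → R, (∏ i, p (z i)) * (w (z c) * ∏ k, u k (z c) (z (e k)))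
      = ∑ a, ∑ z : ι → R, (∏ i, p (z i)) *
          ∏ o : Option κ, o.elim (fun t => if t = a then w a else 0) (fun k => u k a)
            (z (o.elim c e)) := by
        rw [Finset.sum_comm]
        refine Finset.sum_congr rfl fun z _ => ?_
        simp [Fintype.prod_option]
    _ = ∑ a, p a * w a * ∏ k, ∑ b, p b * u k a b := by
        refine Finset.sum_congr rfl fun a _ => ?_
        rw [sum_prod_mul_prod_comp_of_injective p hp he']
        simp [Fintype.prod_option, mul_assoc]

end Marginal

theorem MeasureTheory.measure_biInter_eq_prod_of_eq_ofReal {Ω κ : Type*} [MeasurableSpace Ω]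
    {μ : Measure Ω} {s : Finset κ} {A : κ → Set Ω} {a : κ → ℝ}
    (h : μ (⋂ k ∈ s, A k) = ENNReal.ofReal (∏ k ∈ s, a k))
    (hA : ∀ k ∈ s, μ (A k) = ENNReal.ofReal (a k)) :
    μ (⋂ k ∈ s, A k) = ∏ k ∈ s, μ (A k) := by
  -- `ofReal` commutes only with products of nonnegative reals; a negative `a k` makes `A k` null.
  by_cases hneg : ∃ k ∈ s, a k < 0
  · obtain ⟨k, hk, hak⟩ := hneg
    have h0 : μ (A k) = 0 := by rw [hA k hk, ENNReal.ofReal_eq_zero.2 hak.le]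
    rw [Finset.prod_eq_zero hk h0]
    exact measure_mono_null (Set.biInter_subset_of_mem hk) h0
  · push Not at hneg
    rw [h, ENNReal.ofReal_prod_of_nonneg hneg]
    exact Finset.prod_congr rfl fun k hk => (hA k hk).symm

namespace SBM

open ProbabilityTheory Set Function

variable {Ω : Type} [MeasurableSpace Ω] {μ : Measure Ω} {n r : ℕ} (sbm : SBM Ω μ n r)

def labels (ω : Ω) : Fin n → Fin r := fun i => sbm.Z i ω

lemma measurable_labels : Measurable sbm.labels := measurable_pi_lambda _ sbm.Z_meas

lemma labels_preimage_singleton (z : Fin n → Fin r) :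
    sbm.labels ⁻¹' {z} = {ω | ∀ i, sbm.Z i ω = z i} := by
  ext ω; simp [labels, funext_iff]

lemma measure_labels_preimage (z : Fin n → Fin r) :
    μ (sbm.labels ⁻¹' {z}) = ENNReal.ofReal (∏ i, sbm.p (z i)) := by
  rw [labels_preimage_singleton, sbm.Z_iid]

lemma prod_p_pos (z : Fin n → Fin r) : 0 < ∏ i, sbm.p (z i) :=
  Finset.prod_pos fun i _ => sbm.p_pos (z i)

lemma measure_labels_preimage_ne_zero (z : Fin n → Fin r) : μ (sbm.labels ⁻¹' {z}) ≠ 0 := by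
  simpa [measure_labels_preimage] using sbm.prod_p_pos z

instance isProbabilityMeasure_cond_labels (z : Fin n → Fin r) :
    IsProbabilityMeasure μ[|sbm.labels ← z] :=
  have := sbm.prob
  cond_isProbabilityMeasure (sbm.measure_labels_preimage_ne_zero z)

lemma cond_labels_cdf (z : Fin n → Fin r) {S : Finset (Fin n × Fin n)}
    (hS : ∀ q ∈ S, q.1 < q.2) (x : Fin n × Fin n → ℝ) :
    μ[{ω | ∀ q ∈ S, sbm.X q.1 q.2 ω ≤ x q} | sbm.labels ⁻¹' {z}] =
      ENNReal.ofReal (∏ q ∈ S, sbm.F (z q.1) (z q.2) (x q)) := by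
  rw [cond_apply (sbm.measurable_labels (measurableSet_singleton z)), inter_comm,
    labels_preimage_singleton, sbm.X_cond z S hS x, ← labels_preimage_singleton,
    measure_labels_preimage, ENNReal.ofReal_mul' (sbm.prod_p_pos z).le,
    mul_comm, mul_assoc, ENNReal.mul_inv_cancel (ENNReal.ofReal_pos.2 (sbm.prod_p_pos z)).ne'
      ENNReal.ofReal_ne_top, mul_one]

lemma cond_labels_edge_cdf (z : Fin n → Fin r) {i j : Fin n} (hij : i ≠ j) (x : ℝ) :
    μ[sbm.X i j ⁻¹' Iic x | sbm.labels ⁻¹' {z}] = ENNReal.ofReal (sbm.F (z i) (z j) x) := by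
  wlog h : i < j generalizing i j
  · rw [sbm.X_symm, sbm.F_symm]
    exact this hij.symm (lt_of_le_of_ne (not_lt.1 h) hij.symm)
  have h := sbm.cond_labels_cdf z (S := {(i, j)}) (by simpa) (fun _ => x)
  simp only [Finset.mem_singleton, forall_eq, Finset.prod_singleton] at h
  exact h

theorem iIndepFun_cond_labels {κ : Type*} (z : Fin n → Fin r) {e : κ → Fin n × Fin n}
    (he : Injective e) (hlt : ∀ k, (e k).1 < (e k).2) :
    iIndepFun (fun k => sbm.X (e k).1 (e k).2) μ[|sbm.labels ← z] := by
  classical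
  rw [iIndepFun_iff_iIndep]
  refine iIndepSets.iIndep (fun k => (sbm.X_meas _ _).comap_le)
    (fun k => {A | ∃ t ∈ range Iic, sbm.X (e k).1 (e k).2 ⁻¹' t = A})
    (fun k => isPiSystem_Iic.comap _)
    (fun k => by rw [BorelSpace.measurable_eq (α := ℝ), borel_eq_generateFrom_Iic,
      MeasurableSpace.comap_generateFrom]; rfl) ?_
  rw [iIndepSets_iff]
  intro s A hA
  simp only [mem_ofPred_eq, mem_range, exists_exists_eq_and] at hA
  choose! y hy using hA
  refine measure_biInter_eq_prod_of_eq_ofReal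
    (a := fun k => sbm.F (z (e k).1) (z (e k).2) (y k)) ?_ fun k hk => ?_
  · have h := sbm.cond_labels_cdf z (S := s.image e) (by simpa using fun k _ => hlt k)
      (Function.extend e y 0)
    rw [Finset.prod_image he.injOn] at h
    convert h using 2
    · ext ω
      simp +contextual [← hy, he.extend_apply]
    · simp [he.extend_apply]
  · rw [← hy k hk]
    exact sbm.cond_labels_edge_cdf z (hlt k).ne _

theorem iIndepFun_cond_labels_star (z : Fin n → Fin r) (c : Fin n) {κ : Type*} {ι : κ → Fin n}
    (hι : Injective ι) (hc : ∀ k, ι k ≠ c) :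
    iIndepFun (fun k => sbm.X c (ι k)) μ[|sbm.labels ← z] := by
  have hX : ∀ i j, sbm.X (min i j) (max i j) = sbm.X i j := fun i j => by
    rcases le_total i j with h | h
    · rw [min_eq_left h, max_eq_right h]
    · rw [min_eq_right h, max_eq_left h, sbm.X_symm]
  have he : Injective fun k => (min c (ι k), max c (ι k)) := fun k k' h => by
    simp only [Prod.mk.injEq] at h
    exact hι (by grind)
  simpa only [hX] using sbm.iIndepFun_cond_labels z he fun k => min_lt_max.2 (hc k).symm

lemma map_cond_labels_edge {i j i' j' : Fin n} (hij : i ≠ j) (hij' : i' ≠ j')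
    {z z' : Fin n → Fin r} (hi : z i = z' i') (hj : z j = z' j') :
    (μ[|sbm.labels ← z]).map (sbm.X i j) = (μ[|sbm.labels ← z']).map (sbm.X i' j') := by
  refine Measure.ext_of_Iic _ _ fun x => ?_
  rw [Measure.map_apply (sbm.X_meas i j) measurableSet_Iic,
    Measure.map_apply (sbm.X_meas i' j') measurableSet_Iic,
    sbm.cond_labels_edge_cdf z hij, sbm.cond_labels_edge_cdf z' hij', hi, hj]

/-- `E(f(X i j) | Z i = a, Z j = b)`, evaluated under one label configuration with these two
labels: by `map_cond_labels_edge` the remaining labels do not matter. -/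
noncomputable def condEdgeMean (f : ℝ → ℝ) (i j : Fin n) (a b : Fin r) : ℝ :=
  ∫ ω, f (sbm.X i j ω) ∂μ[|sbm.labels ← update (fun _ => b) i a]

lemma integral_cond_labels_edge {i j i' j' : Fin n} (hij : i ≠ j) (hij' : i' ≠ j')
    (z : Fin n → Fin r) {f : ℝ → ℝ} (hf : Measurable f) :
    ∫ ω, f (sbm.X i' j' ω) ∂μ[|sbm.labels ← z] = sbm.condEdgeMean f i j (z i') (z j') := by
  rw [condEdgeMean, ← integral_map (sbm.X_meas _ _).aemeasurable hf.aestronglyMeasurable,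
    ← integral_map (sbm.X_meas _ _).aemeasurable hf.aestronglyMeasurable,
    sbm.map_cond_labels_edge hij' hij (z' := update (fun _ => z j') i (z i')) (by simp)
      (by simp [hij.symm])]

lemma integral_eq_sum_labels {F : Ω → ℝ} (hF : Integrable F μ) :
    ∫ ω, F ω ∂μ = ∑ z, (∏ i, sbm.p (z i)) * ∫ ω, F ω ∂μ[|sbm.labels ← z] := by
  have := sbm.prob
  have htotal := sum_meas_smul_cond_fiber sbm.measurable_labels μ
  rw [← htotal] at hF
  conv_lhs => rw [← htotal]
  rw [integral_finsetSum_measure fun z hz => integrable_finsetSum_measure.1 hF z hz]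
  simp [integral_smul_measure, measure_labels_preimage, ENNReal.toReal_ofReal (sbm.prod_p_pos _).le]

lemma integral_cond_labels_mul_label (z : Fin n → Fin r) (c : Fin n) (w : Fin r → ℝ) (F : Ω → ℝ) :
    ∫ ω, w (sbm.Z c ω) * F ω ∂μ[|sbm.labels ← z] = w (z c) * ∫ ω, F ω ∂μ[|sbm.labels ← z] := by
  rw [← integral_const_mul]
  refine integral_congr_ae ?_
  filter_upwards [ae_cond_mem (sbm.measurable_labels (measurableSet_singleton z))] with ω hω
  rw [← show sbm.labels ω c = z c from congrFun hω c]
  rfl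

theorem integral_mul_prod_star (c : Fin n) {κ : Type*} [Fintype κ] {ι : κ → Fin n}
    (hι : Injective ι) (hc : ∀ k, ι k ≠ c) (w : Fin r → ℝ) {f : κ → ℝ → ℝ}
    (hf : ∀ k, Measurable (f k)) (hf_bdd : ∀ k, ∃ C, ∀ x, |f k x| ≤ C) :
    ∫ ω, w (sbm.Z c ω) * ∏ k, f k (sbm.X c (ι k) ω) ∂μ =
      ∑ a, sbm.p a * w a * ∏ k, ∑ b, sbm.p b * sbm.condEdgeMean (f k) c (ι k) a b := by
  have := sbm.prob
  have hint : Integrable (fun ω => w (sbm.Z c ω) * ∏ k, f k (sbm.X c (ι k) ω)) μ := by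
    choose C hC using hf_bdd
    have hmeas : Measurable fun ω => w (sbm.Z c ω) * ∏ k, f k (sbm.X c (ι k) ω) :=
      ((measurable_of_finite w).comp (sbm.Z_meas c)).mul
        (Finset.measurable_prod _ fun k _ => (hf k).comp (sbm.X_meas _ _))
    refine Integrable.of_bound hmeas.aestronglyMeasurable ((∑ a, |w a|) * ∏ k, C k)
      (ae_of_all _ fun ω => ?_)
    rw [Real.norm_eq_abs, abs_mul, Finset.abs_prod]
    gcongr with k
    · exact Finset.single_le_sum (fun a _ => abs_nonneg (w a)) (Finset.mem_univ _)
    · exact hC k _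
  rw [sbm.integral_eq_sum_labels hint, ← sum_prod_mul_star sbm.p sbm.p_sum c hι hc]
  refine Finset.sum_congr rfl fun z _ => ?_
  rw [integral_cond_labels_mul_label,
    (sbm.iIndepFun_cond_labels_star z c hι hc).integral_fun_prod_comp
      (fun k => (sbm.X_meas _ _).aemeasurable) (fun k => (hf k).aestronglyMeasurable)]
  simp only [fun k => sbm.integral_cond_labels_edge (hc k).symm (hc k).symm z (hf k)]

lemma setIntegral_label_eq {i j : Fin n} (hij : i ≠ j) (a : Fin r) {f : ℝ → ℝ}
    (hf : Measurable f) (hf_bdd : ∃ C, ∀ x, |f x| ≤ C) :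
    ∫ ω in {ω | sbm.Z i ω = a}, f (sbm.X i j ω) ∂μ =
      sbm.p a * ∑ b, sbm.p b * sbm.condEdgeMean f i j a b := by
  have h := sbm.integral_mul_prod_star i (ι := fun _ : Unit => j) (injective_of_subsingleton _)
    (fun _ => hij.symm) (fun b => if b = a then 1 else 0) (fun _ => hf) (fun _ => hf_bdd)
  rw [← integral_indicator (measurableSet_eq_fun (sbm.Z_meas i) measurable_const)]
  simpa [indicator, ite_mul, Finset.sum_ite_eq'] using h

lemma measureReal_label_eq (i : Fin n) (a : Fin r) : μ.real {ω | sbm.Z i ω = a} = sbm.p a := by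
  have h := sbm.integral_mul_prod_star i (ι := (Empty.elim : Empty → Fin n))
    (injective_of_subsingleton _) (fun k => k.elim) (fun b => if b = a then 1 else 0)
    (f := fun k => k.elim) (fun k => k.elim) (fun k => k.elim)
  rw [← integral_indicator_one (measurableSet_eq_fun (sbm.Z_meas i) measurable_const)]
  simpa [indicator, Finset.sum_ite_eq'] using h

end SBM

theorem diagonalization_population_matrices_general
    {Ω : Type} [MeasurableSpace Ω] {ℙ : Measure Ω} {n r l : ℕ}
    (sbm : SBM Ω ℙ n r)
    (α : Fin l → ℝ → ℝ)
    (hα_meas : ∀ l', Measurable (α l'))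
    (hα_bdd : ∀ l', ∃ C, ∀ u, |α l' u| ≤ C)
    (G : Matrix (Fin l) (Fin r) ℝ)
    (hG : ∀ i j, i ≠ j → ∀ l' z,
      G l' z = (∫ ω in {ω | sbm.Z i ω = z}, α l' (sbm.X i j ω) ∂ℙ)
                  / (ℙ {ω | sbm.Z i ω = z}).toReal)
    (i₁ i₂ i₃ i₄ : Fin n)
    (h12 : i₁ ≠ i₂) (h13 : i₁ ≠ i₃) (h14 : i₁ ≠ i₄)
    (h23 : i₂ ≠ i₃) (h24 : i₂ ≠ i₄) (h34 : i₃ ≠ i₄)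
    (l₁ l₂ : Fin l) :
    (∫ ω, α l₁ (sbm.X i₁ i₂ ω) * α l₂ (sbm.X i₁ i₃ ω) ∂ℙ
        = (G * Matrix.diagonal sbm.p * G.transpose) l₁ l₂) ∧
    ∀ l' : Fin l,
      ∫ ω, α l₁ (sbm.X i₁ i₂ ω) * α l' (sbm.X i₁ i₃ ω) * α l₂ (sbm.X i₁ i₄ ω) ∂ℙ
        = (G * Matrix.diagonal (fun z => G l' z) * Matrix.diagonal sbm.p
            * G.transpose) l₁ l₂ := by
  have hG_eq : ∀ j, i₁ ≠ j → ∀ l' a,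
      G l' a = ∑ b, sbm.p b * sbm.condEdgeMean (α l') i₁ j a b := fun j hj l' a => by
    rw [hG i₁ j hj, ← measureReal_def, sbm.measureReal_label_eq,
      sbm.setIntegral_label_eq hj a (hα_meas l') (hα_bdd l'),
      mul_div_cancel_left₀ _ (sbm.p_pos a).ne']
  have h_moment : ∀ {m : ℕ} {ι : Fin m → Fin n} (β : Fin m → Fin l), Function.Injective ι →
      (∀ k, ι k ≠ i₁) →
      ∫ ω, ∏ k, α (β k) (sbm.X i₁ (ι k) ω) ∂ℙ = ∑ a, sbm.p a * ∏ k, G (β k) a :=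
    fun β hι hc => by
      simpa [← hG_eq _ (hc _).symm] using sbm.integral_mul_prod_star i₁ hι hc (fun _ => 1)
        (fun k => hα_meas (β k)) (fun k => hα_bdd (β k))
  constructor
  · have h := h_moment ![l₁, l₂] (ι := ![i₂, i₃])
      (by simp [Function.Injective, Fin.forall_fin_two, h23, h23.symm])
      (by simp [Fin.forall_fin_two, h12.symm, h13.symm])
    simp only [Fin.prod_univ_two, Matrix.cons_val_zero, Matrix.cons_val_one] at h
    rw [h, Matrix.mul_apply]
    simp only [Matrix.mul_diagonal, Matrix.transpose_apply]
    exact Finset.sum_congr rfl fun a _ => by ring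
  · intro l'
    have h := h_moment ![l₁, l', l₂] (ι := ![i₂, i₃, i₄])
      (by simp [Function.Injective, Fin.forall_fin_succ, h23, h23.symm, h24, h24.symm, h34,
        h34.symm])
      (by simp [Fin.forall_fin_succ, h12.symm, h13.symm, h14.symm])
    simp only [Fin.prod_univ_three, Matrix.cons_val_zero, Matrix.cons_val_one,
      Matrix.cons_val_two, Matrix.tail_cons, Matrix.head_cons] at h
    rw [h, Matrix.mul_apply]
    simp only [Matrix.mul_diagonal, Matrix.transpose_apply]
    exact Finset.sum_congr rfl fun a _ => by ring

/-- Under the weighted stochastic block model, the population matrices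
underlying the diagonalization step factor as `A₀ = G * diag p * Gᵀ` and
`A_{l'} = G * D_{l'} * diag p * Gᵀ`, where `(A₀) l₁ l₂ = E(α_{l₁}(X₁₂) α_{l₂}(X₁₃))`,
`(A_{l'}) l₁ l₂ = E(α_{l₁}(X₁₂) α_{l'}(X₁₃) α_{l₂}(X₁₄))`,
`(G) l' z = E(α_{l'}(X_{i,j}) | Z i = z)` and `D_{l'} = diag ((G) l' 1, …, (G) l' r)`. -/
theorem diagonalization_population_matrices
    {Ω : Type} [MeasurableSpace Ω] {ℙ : Measure Ω} {n r l : ℕ}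
    (sbm : SBM Ω ℙ n r) (hn : 4 ≤ n)
    (α : Fin l → ℝ → ℝ)
    (hα_meas : ∀ l', Measurable (α l'))
    (hα_bdd : ∀ l', ∃ C, ∀ u, |α l' u| ≤ C)
    (G : Matrix (Fin l) (Fin r) ℝ)
    (hG : ∀ i j, i ≠ j → ∀ l' z,
      G l' z = (∫ ω in {ω | sbm.Z i ω = z}, α l' (sbm.X i j ω) ∂ℙ)
                  / (ℙ {ω | sbm.Z i ω = z}).toReal)
    (i₁ i₂ i₃ i₄ : Fin n)
    (h12 : i₁ ≠ i₂) (h13 : i₁ ≠ i₃) (h14 : i₁ ≠ i₄)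
    (h23 : i₂ ≠ i₃) (h24 : i₂ ≠ i₄) (h34 : i₃ ≠ i₄)
    (l₁ l₂ : Fin l) :
    (∫ ω, α l₁ (sbm.X i₁ i₂ ω) * α l₂ (sbm.X i₁ i₃ ω) ∂ℙ
        = (G * Matrix.diagonal sbm.p * G.transpose) l₁ l₂) ∧
    ∀ l' : Fin l,
      ∫ ω, α l₁ (sbm.X i₁ i₂ ω) * α l' (sbm.X i₁ i₃ ω) * α l₂ (sbm.X i₁ i₄ ω) ∂ℙ
        = (G * Matrix.diagonal (fun z => G l' z) * Matrix.diagonal sbm.p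
            * G.transpose) l₁ l₂ :=
  diagonalization_population_matrices_general sbm α hα_meas hα_bdd G hG i₁ i₂ i₃ i₄ h12 h13 h14 h23
    h24 h34 l₁ l₂
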